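/- arXiv:2007.10482 — 2 statements merged into one kernel-verified Lean document; each statement's English description precedes it below -/
import Mathlib

section
/- If f(τ)/g(τ) < M for all τ ∈ (1,x) and p > 1, then H^{α,β}_{1,x}[f^p](x) ≤ (M^p/(M+1)^p) · H^{α,β}_{1,x}[(f+g)^p](x), for positive functions f, g with finite integrals, α > 0, β ∈ (0,1], x > 1. -/
open MeasureTheory Real

/-- Kernel of the generalized proportional Hadamard fractional integral. -/
noncomputable def Hker (α β x : ℝ) (z : ℝ → ℝ) (t : ℝ) : ℝ :=
  Real.exp ((β - 1) / β * (Real.log x - Real.log t)) *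
    (Real.log x - Real.log t) ^ (α - 1) * z t / t

/-- The one-sided generalized proportional Hadamard fractional integral
`H^{α,β}_{1,x}[z](x)`. -/
noncomputable def H (α β x : ℝ) (z : ℝ → ℝ) : ℝ :=
  (1 / (β ^ α * Real.Gamma α)) * ∫ t in Set.Ioo 1 x, Hker α β x z t

/-!
Pointwise, `f < M g` gives `f ≤ M/(M+1) (f+g)`; raising this to the power `p` and integrating
against the nonnegative kernel of `H` gives the inequality.
-/

theorem rpow_le_div_rpow_mul_rpow_add {a b M p : ℝ} (ha : 0 < a) (hb : 0 < b)
    (hab : a / b < M) (hp : 0 ≤ p) :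
    a ^ p ≤ M ^ p / (M + 1) ^ p * (a + b) ^ p := by
  have hM : 0 < M := (div_pos ha hb).trans hab
  have hlt : a < M * b := (div_lt_iff₀ hb).mp hab
  have hle : a ≤ M / (M + 1) * (a + b) := by
    rw [div_mul_eq_mul_div, le_div_iff₀ (by linarith)]
    nlinarith
  calc a ^ p ≤ (M / (M + 1) * (a + b)) ^ p := rpow_le_rpow ha.le hle hp
    _ = M ^ p / (M + 1) ^ p * (a + b) ^ p := by
      rw [mul_rpow (by positivity) (by positivity), div_rpow hM.le (by linarith)]

section Hadamard

variable {α β x : ℝ}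

theorem Hker_eq_mul (z : ℝ → ℝ) (t : ℝ) :
    Hker α β x z t = Hker α β x (fun _ ↦ 1) t * z t := by
  unfold Hker
  ring

theorem Hker_const_mul (c : ℝ) (z : ℝ → ℝ) :
    Hker α β x (fun t ↦ c * z t) = fun t ↦ c * Hker α β x z t := by
  funext t
  unfold Hker
  ring

theorem Hker_one_nonneg {t : ℝ} (ht : 0 < t) (htx : t ≤ x) :
    0 ≤ Hker α β x (fun _ ↦ 1) t := by
  have hlog : 0 ≤ log x - log t := sub_nonneg.mpr (log_le_log ht htx)
  unfold Hker
  positivity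

theorem H_const_mul (c : ℝ) (z : ℝ → ℝ) :
    H α β x (fun t ↦ c * z t) = c * H α β x z := by
  unfold H
  rw [Hker_const_mul, integral_const_mul]
  ring

theorem H_mono (hα : 0 < α) (hβ : 0 < β) {z w : ℝ → ℝ}
    (hz : IntegrableOn (Hker α β x z) (Set.Ioo 1 x))
    (hw : IntegrableOn (Hker α β x w) (Set.Ioo 1 x))
    (hzw : ∀ t ∈ Set.Ioo 1 x, z t ≤ w t) :
    H α β x z ≤ H α β x w := by
  have hker : ∀ t ∈ Set.Ioo 1 x, Hker α β x z t ≤ Hker α β x w t := fun t ht ↦ by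
    rw [Hker_eq_mul z, Hker_eq_mul w]
    exact mul_le_mul_of_nonneg_left (hzw t ht) (Hker_one_nonneg (by linarith [ht.1]) ht.2.le)
  have hconst : 0 ≤ 1 / (β ^ α * Gamma α) := by
    have := Gamma_pos_of_pos hα
    have := rpow_pos_of_pos hβ α
    positivity
  exact mul_le_mul_of_nonneg_left (setIntegral_mono_on hz hw measurableSet_Ioo hker) hconst

end Hadamard

theorem stmt_10_general (p α β M x : ℝ) (f g : ℝ → ℝ) (hp : 1 < p) (hα : 0 < α)
    (hβ : β ∈ Set.Ioc (0:ℝ) 1)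
    (hf : ∀ t ∈ Set.Ici (1:ℝ), 0 < f t) (hg : ∀ t ∈ Set.Ici (1:ℝ), 0 < g t)
    (hfint : IntegrableOn (Hker α β x (fun t => f t ^ p)) (Set.Ioo 1 x))
    (hfgint : IntegrableOn (Hker α β x (fun t => (f t + g t) ^ p)) (Set.Ioo 1 x))
    (hbound : ∀ t ∈ Set.Ioo (1:ℝ) x, f t / g t < M) :
    H α β x (fun t => f t ^ p) ≤
      M ^ p / (M + 1) ^ p * H α β x (fun t => (f t + g t) ^ p) := by
  set c := M ^ p / (M + 1) ^ p
  have hcint : IntegrableOn (Hker α β x fun t ↦ c * (f t + g t) ^ p) (Set.Ioo 1 x) := by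
    rw [Hker_const_mul]
    exact hfgint.const_mul c
  rw [← H_const_mul]
  refine H_mono hα hβ.1 hfint hcint fun t ht ↦ ?_
  exact rpow_le_div_rpow_mul_rpow_add (hf t ht.1.le) (hg t ht.1.le) (hbound t ht) (by linarith)

theorem stmt_10 (p α β M x : ℝ) (f g : ℝ → ℝ) (hp : 1 < p) (hα : 0 < α)
    (hβ : β ∈ Set.Ioc (0:ℝ) 1) (hx : 1 < x)
    (hf : ∀ t ∈ Set.Ici (1:ℝ), 0 < f t) (hg : ∀ t ∈ Set.Ici (1:ℝ), 0 < g t)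
    (hfint : IntegrableOn (Hker α β x (fun t => f t ^ p)) (Set.Ioo 1 x))
    (hfgint : IntegrableOn (Hker α β x (fun t => (f t + g t) ^ p)) (Set.Ioo 1 x))
    (hbound : ∀ t ∈ Set.Ioo (1:ℝ) x, f t / g t < M) :
    H α β x (fun t => f t ^ p) ≤
      M ^ p / (M + 1) ^ p * H α β x (fun t => (f t + g t) ^ p) :=
  stmt_10_general p α β M x f g hp hα hβ hf hg hfint hfgint hbound
end

section
/- (Chebyshev-type inequality) Let f, g, h be positive continuous functions on [1,∞) such that (g(τ) − g(σ)) · (f(σ)/h(σ) − f(τ)/h(τ)) ≥ 0 for all τ, σ ∈ [1,x), x > 1. Then for α > 0, β ∈ (0,1]: H^{α,β}_{1,x}[f](x) / H^{α,β}_{1,x}[h](x) ≥ H^{α,β}_{1,x}[g·f](x) / H^{α,β}_{1,x}[g·h](x). -/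
open MeasureTheory Real

/-!
Chebyshev's integral inequality for oppositely ordered functions: with the positive weight
`w = Hker h` on `(1, x)`, the four fractional integrals are the weighted integrals of `1`, `g`,
`f / h` and `g * (f / h)`. Since `g` and `f / h` are oppositely ordered,
`w s * w t * (g s - g t) * (f s / h s - f t / h t) ≤ 0`, and integrating this over the square
`(1, x)²` gives twice `H[gf] H[h] - H[f] H[gh]`.
-/

section Chebyshev

variable {ι : Type*} [MeasurableSpace ι] {μ : Measure ι} [SFinite μ] {S : Set ι} {w a b : ι → ℝ}

theorem AntivaryOn.integral_mul_mul_le (hab : AntivaryOn a b S) (hS : ∀ᵐ t ∂μ, t ∈ S)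
    (hw : ∀ t ∈ S, 0 ≤ w t) (hw_int : Integrable w μ)
    (hwa_int : Integrable (fun t => w t * a t) μ) (hwb_int : Integrable (fun t => w t * b t) μ)
    (hwab_int : Integrable (fun t => w t * (a t * b t)) μ) :
    (∫ t, w t * (a t * b t) ∂μ) * ∫ t, w t ∂μ ≤
      (∫ t, w t * a t ∂μ) * ∫ t, w t * b t ∂μ := by
  have hS₂ : ∀ᵐ p ∂μ.prod μ, p.1 ∈ S ∧ p.2 ∈ S :=
    (Measure.quasiMeasurePreserving_fst.ae hS).and (Measure.quasiMeasurePreserving_snd.ae hS)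
  have h₁ := hwab_int.mul_prod hw_int
  have h₂ := hw_int.mul_prod hwab_int
  have h₃ := hwa_int.mul_prod hwb_int
  have h₄ := hwb_int.mul_prod hwa_int
  have hdouble : ∫ p, (w p.1 * (a p.1 * b p.1) * w p.2 + w p.1 * (w p.2 * (a p.2 * b p.2)) -
      (w p.1 * a p.1 * (w p.2 * b p.2) + w p.1 * b p.1 * (w p.2 * a p.2))) ∂μ.prod μ ≤ 0 := by
    refine integral_nonpos_of_ae (hS₂.mono fun p ⟨hs, ht⟩ => ?_)
    calc _ = w p.1 * w p.2 * ((a p.2 - a p.1) * (b p.2 - b p.1)) := by ring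
      _ ≤ 0 := mul_nonpos_of_nonneg_of_nonpos (mul_nonneg (hw _ hs) (hw _ ht))
        (hab.sub_mul_sub_nonpos hs ht)
  rw [integral_sub (f := fun p => _ + _) (g := fun p => _ + _) (h₁.add h₂) (h₃.add h₄),
    integral_add h₁ h₂, integral_add h₃ h₄,
    integral_prod_mul (fun t => w t * (a t * b t)) w,
    integral_prod_mul w (fun t => w t * (a t * b t)),
    integral_prod_mul (fun t => w t * a t) (fun t => w t * b t),
    integral_prod_mul (fun t => w t * b t) (fun t => w t * a t)] at hdouble
  linarith

end Chebyshev

section Hadamard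

variable {α β x : ℝ}

theorem Hker_nonneg {z : ℝ → ℝ} {t : ℝ} (ht₀ : 0 < t) (htx : t ≤ x) (hz : 0 ≤ z t) :
    0 ≤ Hker α β x z t := by
  have := sub_nonneg.2 (log_le_log ht₀ htx)
  unfold Hker
  positivity

theorem Hker_mul (u z : ℝ → ℝ) (t : ℝ) :
    Hker α β x (fun s => u s * z s) t = Hker α β x z t * u t := by
  unfold Hker
  ring

theorem Hker_eq_Hker_mul_div {z w : ℝ → ℝ} {t : ℝ} (hw : w t ≠ 0) :
    Hker α β x z t = Hker α β x w t * (z t / w t) := by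
  unfold Hker
  field_simp

theorem H_mul_H_le_of_integral_mul_integral_le {z₁ z₂ z₃ z₄ : ℝ → ℝ}
    (hI : (∫ t in Set.Ioo 1 x, Hker α β x z₁ t) * (∫ t in Set.Ioo 1 x, Hker α β x z₂ t) ≤
      (∫ t in Set.Ioo 1 x, Hker α β x z₃ t) * (∫ t in Set.Ioo 1 x, Hker α β x z₄ t)) :
    H α β x z₁ * H α β x z₂ ≤ H α β x z₃ * H α β x z₄ := by
  unfold H
  linear_combination mul_le_mul_of_nonneg_left hI (sq_nonneg (1 / (β ^ α * Real.Gamma α)))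

end Hadamard

theorem stmt_15_general (α β x : ℝ) (f g h : ℝ → ℝ)
    (hh : ∀ t ∈ Set.Ici (1:ℝ), 0 < h t)
    (hfint : IntegrableOn (Hker α β x f) (Set.Ioo 1 x))
    (hhint : IntegrableOn (Hker α β x h) (Set.Ioo 1 x))
    (hgfint : IntegrableOn (Hker α β x (fun t => g t * f t)) (Set.Ioo 1 x))
    (hghint : IntegrableOn (Hker α β x (fun t => g t * h t)) (Set.Ioo 1 x))
    (hhpos : 0 < H α β x h) (hghpos : 0 < H α β x (fun t => g t * h t))
    (hsync : ∀ τ ∈ Set.Ico (1:ℝ) x, ∀ σ ∈ Set.Ico (1:ℝ) x,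
      0 ≤ (g τ - g σ) * (f σ / h σ - f τ / h τ)) :
    H α β x (fun t => g t * f t) / H α β x (fun t => g t * h t) ≤
      H α β x f / H α β x h := by
  have hh₀ : ∀ t ∈ Set.Ioo 1 x, h t ≠ 0 := fun t ht => (hh t ht.1.le).ne'
  have hf_eq : Set.EqOn (Hker α β x f) (fun t => Hker α β x h t * (f t / h t)) (Set.Ioo 1 x) :=
    fun t ht => Hker_eq_Hker_mul_div (hh₀ t ht)
  have hgf_eq : Set.EqOn (Hker α β x (fun t => g t * f t))
      (fun t => Hker α β x h t * (g t * (f t / h t))) (Set.Ioo 1 x) := fun t ht => by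
    rw [Hker_eq_Hker_mul_div (hh₀ t ht), mul_div_assoc]
  have hgh_eq : Hker α β x (fun t => g t * h t) = fun t => Hker α β x h t * g t :=
    funext (Hker_mul g h)
  have hanti : AntivaryOn g (fun t => f t / h t) (Set.Ioo 1 x) :=
    antivaryOn_iff_forall_mul_nonpos.2 fun τ hτ σ hσ => by
      linear_combination hsync τ (Set.Ioo_subset_Ico_self hτ) σ (Set.Ioo_subset_Ico_self hσ)
  have hcheb := hanti.integral_mul_mul_le (μ := volume.restrict (Set.Ioo 1 x))
    (ae_restrict_mem measurableSet_Ioo)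
    (fun t ht => Hker_nonneg (by linarith [ht.1]) ht.2.le (hh t ht.1.le).le) hhint
    (hgh_eq ▸ hghint) (hfint.congr_fun hf_eq measurableSet_Ioo)
    (hgfint.congr_fun hgf_eq measurableSet_Ioo)
  rw [← hgh_eq, ← setIntegral_congr_fun measurableSet_Ioo hf_eq,
    ← setIntegral_congr_fun measurableSet_Ioo hgf_eq] at hcheb
  rw [div_le_div_iff₀ hghpos hhpos, mul_comm (H α β x f)]
  exact H_mul_H_le_of_integral_mul_integral_le hcheb

theorem stmt_15 (α β x : ℝ) (f g h : ℝ → ℝ) (hα : 0 < α)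
    (hβ : β ∈ Set.Ioc (0:ℝ) 1) (hx : 1 < x)
    (hf : ∀ t ∈ Set.Ici (1:ℝ), 0 < f t) (hg : ∀ t ∈ Set.Ici (1:ℝ), 0 < g t)
    (hh : ∀ t ∈ Set.Ici (1:ℝ), 0 < h t)
    (hfc : ContinuousOn f (Set.Ici 1)) (hgc : ContinuousOn g (Set.Ici 1))
    (hhc : ContinuousOn h (Set.Ici 1))
    (hfint : IntegrableOn (Hker α β x f) (Set.Ioo 1 x))
    (hhint : IntegrableOn (Hker α β x h) (Set.Ioo 1 x))
    (hgfint : IntegrableOn (Hker α β x (fun t => g t * f t)) (Set.Ioo 1 x))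
    (hghint : IntegrableOn (Hker α β x (fun t => g t * h t)) (Set.Ioo 1 x))
    (hhpos : 0 < H α β x h) (hghpos : 0 < H α β x (fun t => g t * h t))
    (hsync : ∀ τ ∈ Set.Ico (1:ℝ) x, ∀ σ ∈ Set.Ico (1:ℝ) x,
      0 ≤ (g τ - g σ) * (f σ / h σ - f τ / h τ)) :
    H α β x (fun t => g t * f t) / H α β x (fun t => g t * h t) ≤
      H α β x f / H α β x h :=
  stmt_15_general α β x f g h hh hfint hhint hgfint hghint hhpos hghpos hsync
end
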